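/- arXiv:2203.05615 — 2 statements merged into one kernel-verified Lean document; each statement's English description precedes it below -/
import Mathlib

section
/- Suppose κ is a regular cardinal, ν is an infinite cardinal, and there is an upper-regressive colouring c : [κ]² → θ (with θ an infinite cardinal) such that for every cofinal B ⊆ κ there exists η < ν with otp(c[{η} ⊛ B]) = θ. Then κ ≤ 2^ν. -/
/-!
Suppose `2 ^ ν < κ`. It suffices to find a cofinal `B ⊆ κ` on which every colour `c η ·`
with `η < ν` is bounded below `θ`, since then each `c[{η} ⊛ B]` has order type `< θ`.

If `cof θ ≤ ν`, fix a cofinal family in `θ` of size `cof θ` and code each `β` by the function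
sending `η` to an index bounding `c η β`. There are at most `ν ^ ν = 2 ^ ν < κ` codes, so one
code is taken on a cofinal set, and that set works.

If `cof θ > ν`, then `d β = sup_{η < ν} (c η β + 1)` is below `θ`, and it is regressive on the
ordinals of cofinality `ν⁺`. A weak form of Fodor's lemma, proved with a closure point of
cofinality `ν⁺` built from the derivative of a normal function, makes `d` constant on a cofinal
set, and that set works.
-/

open Cardinal Ordinal Set

/-- The order type of a set of ordinals. -/
noncomputable def otp (S : Set Ordinal.{0}) : Ordinal.{1} :=
  @Ordinal.type S (Subrel (· < ·) S)
    (RelEmbedding.isWellOrder (Subrel.relEmbedding (· < ·) S))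

open Order

universe u

theorem otp_le_lift_of_subset_Iio {S : Set Ordinal.{0}} {δ : Ordinal.{0}} (h : S ⊆ Iio δ) :
    otp S ≤ Ordinal.lift.{1} δ := by
  rw [← Ordinal.type_lt_Iio δ]
  exact @RelEmbedding.ordinal_type_le _ _ _ _
    (@RelEmbedding.isWellOrder _ _ _ _ (Subrel.relEmbedding (· < ·) S) isWellOrder_lt) _
    ⟨⟨inclusion h, inclusion_injective h⟩, Iff.rfl⟩

theorem ord_lt_of_lt_cof {ν : Cardinal} {β : Ordinal} (h : ν < β.cof) : ν.ord < β :=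
  lt_of_not_ge fun hβ => h.not_ge <| (cof_le_card β).trans (by simpa using card_le_card hβ)

def IsCofinalBelow (o : Ordinal) (S : Set Ordinal) : Prop :=
  S ⊆ Iio o ∧ ∀ α < o, ∃ β ∈ S, α ≤ β

theorem exists_bound_of_not_isCofinalBelow {o : Ordinal} {S : Set Ordinal} (hS : S ⊆ Iio o)
    (h : ¬IsCofinalBelow o S) : ∃ α < o, ∀ β ∈ S, β < α := by
  by_contra! h'
  exact h ⟨hS, h'⟩

def ColoursBoundedOn (c : Ordinal → Ordinal → Ordinal) (o θ : Ordinal) (B : Set Ordinal) :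
    Prop :=
  ∀ η < o, ∃ e < θ, ∀ β ∈ B, η < β → c η β < e

theorem iSup_Iio_add_one_lt_of_lt_cof {o a : Ordinal} (ho : o.card < a.cof)
    {f : Ordinal → Ordinal} (hf : ∀ γ < o, f γ < a) : ⨆ γ : Iio o, f γ + 1 < a := by
  refine lift_iSup_add_one_lt_of_lt_cof ?_ fun γ => hf γ γ.2
  rwa [← lift_cof, Cardinal.mk_Iio_ordinal, Cardinal.lift_lift, Cardinal.lift_lt]

theorem exists_lt_ord_cof_eq_mapsTo_Iio {κ μ : Cardinal} (hκ : κ.IsRegular) (hμ : μ.IsRegular)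
    (hμκ : μ < κ) {b : Ordinal → Ordinal} (hb : ∀ γ < κ.ord, b γ < κ.ord) :
    ∃ β < κ.ord, β.cof = μ ∧ MapsTo b (Iio β) (Iio β) := by
  set f : Ordinal → Ordinal := fun y => ⨆ γ : Iio y, b γ + 1
  have hμlim : IsSuccLimit μ.ord := isSuccLimit_ord hμ.aleph0_le
  refine ⟨deriv f μ.ord, ?_, ?_, fun γ hγ => ?_⟩
  · refine deriv_lt_ord hκ (hμ.aleph0_le.trans_lt hμκ).ne' (fun y hy => ?_) (ord_lt_ord.2 hμκ)
    exact iSup_Iio_add_one_lt_of_lt_cof (by rwa [hκ.cof_ord, ← lt_ord])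
      fun γ hγ => hb γ (hγ.trans hy)
  · rw [cof_map_of_isNormal (isNormal_deriv f) hμlim, hμ.cof_ord]
  · obtain ⟨o, ho, hγo⟩ := ((isNormal_deriv f).lt_iff_exists_lt hμlim).1 hγ
    calc b γ < b γ + 1 := lt_add_one _
      _ ≤ f (deriv f o + 1) :=
        Ordinal.le_iSup (fun δ : Iio (deriv f o + 1) => b δ + 1) ⟨γ, hγo.trans (lt_add_one _)⟩
      _ ≤ deriv f (o + 1) := by rw [deriv_add_one]; exact iterate_le_nfp f _ 1
      _ < deriv f μ.ord := deriv_strictMono f (hμlim.add_one_lt ho)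

theorem exists_isCofinalBelow_fiber_of_regressive {κ μ : Cardinal} (hκ : κ.IsRegular)
    (hμ : μ.IsRegular) (hμκ : μ < κ) {d : Ordinal → Ordinal}
    (hd : ∀ β < κ.ord, β.cof = μ → d β < β) :
    ∃ γ, IsCofinalBelow κ.ord {β | β < κ.ord ∧ β.cof = μ ∧ d β = γ} := by
  by_contra! h
  choose a haκ ha using fun γ => exists_bound_of_not_isCofinalBelow (fun β hβ => hβ.1) (h γ)
  obtain ⟨β, hβκ, hβμ, hβa⟩ := exists_lt_ord_cof_eq_mapsTo_Iio hκ hμ hμκ fun γ _ => haκ γ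
  exact (hβa (hd β hβκ hβμ)).not_gt (ha _ β ⟨hβκ, hβμ, rfl⟩)

theorem exists_isCofinalBelow_fiber_of_mk_lt {κ : Cardinal.{u}} (hκ : κ.IsRegular) {ι : Type u}
    (hι : #ι < κ) (G : Ordinal → ι) :
    ∃ i, IsCofinalBelow κ.ord {β | β < κ.ord ∧ G β = i} := by
  by_contra! h
  choose a haκ ha using fun i => exists_bound_of_not_isCofinalBelow (fun β hβ => hβ.1) (h i)
  have hsup : iSup a < κ.ord := iSup_lt_of_lt_cof (by rwa [hκ.cof_ord]) haκ
  exact (ha _ _ ⟨hsup, rfl⟩).not_ge (Ordinal.le_iSup a _)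

theorem exists_isCofinalBelow_coloursBoundedOn_of_cof_le {κ ν : Cardinal.{u}} {θ : Ordinal.{u}}
    (hκ : κ.IsRegular) (hν : ℵ₀ ≤ ν) (hνκ : 2 ^ ν < κ) (hθ : IsSuccLimit θ) (hcof : θ.cof ≤ ν)
    {c : Ordinal → Ordinal → Ordinal} (hcθ : ∀ α β, α < β → β < κ.ord → c α β < θ) :
    ∃ B, IsCofinalBelow κ.ord B ∧ ColoursBoundedOn c ν.ord θ B := by
  obtain ⟨s, hs, hsθ⟩ := Order.exists_cof_eq θ.ToType
  rw [cof_toType] at hsθ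
  let e : s → Ordinal := fun i => ToType.mk.symm i.1
  have he : ∀ i, e i < θ := fun i => (ToType.mk.symm i.1).2
  have hcofinal : ∀ x < θ, ∃ i, x < e i := fun x hx => by
    obtain ⟨i, hi, hxi⟩ := hs (ToType.mk ⟨x + 1, hθ.add_one_lt hx⟩)
    exact ⟨⟨i, hi⟩, add_one_le_iff.1 (ToType.mk.le_symm_apply.2 hxi)⟩
  have : Nonempty s := ⟨(hcofinal 0 hθ.bot_lt).choose⟩
  choose! j hj using fun η β (h : η < β) (hβ : β < κ.ord) => hcofinal (c η β) (hcθ η β h hβ)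
  let G : Ordinal → ν.ord.ToType → s := fun β t => j (ToType.mk.symm t) β
  have hG : #(ν.ord.ToType → s) < κ := calc
    #(ν.ord.ToType → s) = #s ^ ν := by simp
    _ ≤ ν ^ ν := power_le_power_right (hsθ ▸ hcof)
    _ = 2 ^ ν := power_self_eq hν
    _ < κ := hνκ
  obtain ⟨g, hg⟩ := exists_isCofinalBelow_fiber_of_mk_lt hκ hG G
  refine ⟨_, hg, fun η hη => ⟨e (g (ToType.mk ⟨η, hη⟩)), he _, ?_⟩⟩
  rintro β ⟨hβκ, rfl⟩ hηβ
  simpa [G] using hj η β hηβ hβκ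

theorem exists_isCofinalBelow_coloursBoundedOn_of_lt_cof {κ ν : Cardinal} {θ : Ordinal}
    (hκ : κ.IsRegular) (hν : ℵ₀ ≤ ν) (hνκ : succ ν < κ) (hcof : ν < θ.cof)
    {c : Ordinal → Ordinal → Ordinal} (hcθ : ∀ α β, α < β → β < κ.ord → c α β < θ)
    (hcreg : ∀ α β, α < β → β < κ.ord → c α β < β) :
    ∃ B, IsCofinalBelow κ.ord B ∧ ColoursBoundedOn c ν.ord θ B := by
  set d : Ordinal → Ordinal := fun β => ⨆ η : Iio ν.ord, c η β + 1
  have hcd : ∀ β, ∀ η < ν.ord, c η β < d β := fun β η hη =>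
    (lt_add_one _).trans_le (Ordinal.le_iSup (fun η : Iio ν.ord => c η β + 1) ⟨η, hη⟩)
  have hd : ∀ β {a}, ν < a.cof → (∀ η < ν.ord, c η β < a) → d β < a := fun β a ha h =>
    iSup_Iio_add_one_lt_of_lt_cof (by rwa [card_ord]) h
  have hν_lt_cof : ∀ {β : Ordinal}, β.cof = succ ν → ν < β.cof := fun h => h ▸ lt_succ ν
  obtain ⟨γ, hγ⟩ := exists_isCofinalBelow_fiber_of_regressive hκ (isRegular_succ hν) hνκ
    (d := d) fun β hβκ hβcof => hd β (hν_lt_cof hβcof) fun η hη =>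
      hcreg η β (hη.trans (ord_lt_of_lt_cof (hν_lt_cof hβcof))) hβκ
  obtain ⟨β, ⟨hβκ, hβcof, rfl⟩, -⟩ := hγ.2 0 hκ.ord_pos
  refine ⟨_, hγ, fun η hη => ⟨d β, hd β hcof fun η' hη' =>
    hcθ η' β (hη'.trans (ord_lt_of_lt_cof (hν_lt_cof hβcof))) hβκ, ?_⟩⟩
  rintro β' ⟨-, -, hβ'⟩ -
  exact hβ' ▸ hcd β' η hη

theorem stmt_2 (κ ν θ : Cardinal)
    (hκreg : κ.IsRegular)
    (hν : ℵ₀ ≤ ν) (hθ : ℵ₀ ≤ θ)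
    (c : Ordinal → Ordinal → Ordinal)
    (hcθ : ∀ α β : Ordinal, α < β → β < κ.ord → c α β < θ.ord)
    (hcreg : ∀ α β : Ordinal, α < β → β < κ.ord → c α β < β)
    (hwit : ∀ B : Set Ordinal, B ⊆ Set.Iio κ.ord →
      (∀ α < κ.ord, ∃ β ∈ B, α ≤ β) →
      ∃ η < ν.ord, otp {x : Ordinal | ∃ β ∈ B, η < β ∧ c η β = x} =
        Ordinal.lift.{1} θ.ord) :
    κ ≤ 2 ^ ν := by
  by_contra! h2ν
  obtain ⟨B, hB, hbounded⟩ : ∃ B, IsCofinalBelow κ.ord B ∧ ColoursBoundedOn c ν.ord θ.ord B := by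
    rcases le_or_gt θ.ord.cof ν with hcof | hcof
    · exact exists_isCofinalBelow_coloursBoundedOn_of_cof_le hκreg hν h2ν
        (isSuccLimit_ord hθ) hcof hcθ
    · exact exists_isCofinalBelow_coloursBoundedOn_of_lt_cof hκreg hν
        ((succ_le_of_lt (cantor ν)).trans_lt h2ν) hcof hcθ hcreg
  obtain ⟨η, hη, hotp⟩ := hwit B hB.1 hB.2
  obtain ⟨e, he, hce⟩ := hbounded η hη
  have hotp_le : otp {x | ∃ β ∈ B, η < β ∧ c η β = x} ≤ Ordinal.lift.{1} e :=
    otp_le_lift_of_subset_Iio fun _ ⟨β, hβ, hηβ, hx⟩ => hx ▸ hce β hβ hηβ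
  rw [hotp, Ordinal.lift_le] at hotp_le
  exact hotp_le.not_gt he
end

section
/- Let θ be an infinite regular cardinal. Then there exists a map p : 𝔡_θ × θ → θ such that for every nonempty family ℬ of cofinal subsets of θ with |ℬ| < 𝔟_θ, there exists η < 𝔡_θ with p[{η} × B] = θ for all B ∈ ℬ. -/
open Cardinal Ordinal Set

/-- `f` is a function from `θ` to `θ` (as a function on ordinals). -/
def intoFun (θ : Cardinal) (f : Ordinal → Ordinal) : Prop :=
  ∀ τ < θ.ord, f τ < θ.ord

/-- `f <* g`: eventual domination below `θ`. -/
def evLt (θ : Cardinal) (f g : Ordinal → Ordinal) : Prop :=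
  ∃ ε < θ.ord, ∀ τ : Ordinal, ε ≤ τ → τ < θ.ord → f τ < g τ

/-- The bounding number `𝔟_θ` of `(θ^θ, <*)`. -/
noncomputable def bNum (θ : Cardinal) : Cardinal :=
  sInf { c : Cardinal | ∃ o : Ordinal, o.card = c ∧
    ∃ F : Ordinal → Ordinal → Ordinal,
      (∀ i < o, intoFun θ (F i)) ∧
      ¬ ∃ g : Ordinal → Ordinal, intoFun θ g ∧ ∀ i < o, evLt θ (F i) g }

/-- The dominating number `𝔡_θ` of `(θ^θ, <*)`. -/
noncomputable def dNum (θ : Cardinal) : Cardinal :=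
  sInf { c : Cardinal | ∃ o : Ordinal, o.card = c ∧
    ∃ F : Ordinal → Ordinal → Ordinal,
      (∀ i < o, intoFun θ (F i)) ∧
      ∀ g : Ordinal → Ordinal, intoFun θ g → ∃ i < o, evLt θ g (F i) }

/-!
Fix a `<*`-dominating family `(f_η)_{η < 𝔡_θ}` and a map `v : θ → θ` all of whose fibres are
unbounded in `θ`. Each `f_η` yields a normal sequence `climb f_η` with
`f_η (climb f_η γ) < climb f_η (γ + 1)`, which cuts `θ` into the blocks
`[climb f_η γ, climb f_η (γ + 1))`; let `p(η, β) = v γ` for the block `γ` containing `β`.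
Given fewer than `𝔟_θ` cofinal sets `B`, the maps `σ ↦ min (B \ σ)` are all `<*`-below one `g`,
and `g <* f_η` for some `η`. For large `γ`, the set `B` then meets `[σ, f_η σ)` with
`σ = climb f_η γ`, i.e. it meets block `γ`; taking `γ` in the fibre `v⁻¹{τ}` gives
`τ ∈ p[{η} × B]`.
-/

universe u v w

theorem exists_image_Iio_ord_eq_range {α : Type v} {X : Type w} [Nonempty X] {c : Cardinal.{u}}
    (hc : Cardinal.lift.{u} #α = Cardinal.lift.{v} c) (G : α → X) :
    ∃ F : Ordinal.{u} → X, F '' Iio c.ord = range G := by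
  obtain ⟨e⟩ : Nonempty (Iio c.ord ≃ α) := by
    rw [← Cardinal.lift_mk_eq'.{u + 1, v}, Cardinal.mk_Iio_ordinal, Cardinal.card_ord]
    simpa using congrArg Cardinal.lift.{u + 1} hc.symm
  refine ⟨Function.extend Subtype.val (G ∘ e) fun _ => Classical.arbitrary X, ?_⟩
  rw [Set.image_eq_range]
  simp only [Subtype.val_injective.extend_apply]
  exact e.surjective.range_comp G

theorem exists_le_apply_of_injective {c : Cardinal.{u}} {β : Type v} {f : β → Ordinal.{u}}
    (hf : Function.Injective f) (hβ : Cardinal.lift.{v} c ≤ Cardinal.lift.{u} #β)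
    {δ : Ordinal.{u}} (hδ : δ < c.ord) : ∃ b, δ ≤ f b := by
  by_contra! h
  have hle := Cardinal.lift_mk_le_lift_mk_of_injective (f := fun b => (⟨f b, h b⟩ : Iio δ))
    fun a b hab => hf (congrArg Subtype.val hab)
  rw [Cardinal.mk_Iio_ordinal, Cardinal.lift_lift] at hle
  have hβ' := Cardinal.lift_le.{u + 1}.mpr hβ
  rw [Cardinal.lift_lift, Cardinal.lift_lift] at hβ'
  exact (Cardinal.lt_ord.mp hδ).not_ge (Cardinal.lift_le.mp (hβ'.trans hle))

section Climb

variable (f : Ordinal.{u} → Ordinal.{u})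

noncomputable def climb (γ : Ordinal.{u}) : Ordinal.{u} :=
  Ordinal.limitRecOn γ 0 (fun _ a => max (f a) a + 1) fun o _ IH => ⨆ a : Iio o, IH a a.2

theorem climb_zero : climb f 0 = 0 :=
  Ordinal.limitRecOn_zero ..

theorem climb_succ (γ : Ordinal.{u}) :
    climb f (Order.succ γ) = Order.succ (max (f (climb f γ)) (climb f γ)) := by
  rw [Order.succ_eq_add_one, Order.succ_eq_add_one]
  exact Ordinal.limitRecOn_add_one ..

theorem climb_of_isSuccLimit {γ : Ordinal.{u}} (hγ : Order.IsSuccLimit γ) :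
    climb f γ = ⨆ a : Iio γ, climb f a :=
  Ordinal.limitRecOn_limit _ _ _ _ hγ

theorem apply_climb_lt_climb_succ (γ : Ordinal.{u}) : f (climb f γ) < climb f (Order.succ γ) :=
  climb_succ f γ ▸ Order.lt_succ_of_le (le_max_left _ _)

theorem climb_lt_climb_succ (γ : Ordinal.{u}) : climb f γ < climb f (Order.succ γ) :=
  climb_succ f γ ▸ Order.lt_succ_of_le (le_max_right _ _)

theorem isNormal_climb : Order.IsNormal (climb f) := by
  refine .of_succ_lt (climb_lt_climb_succ f) fun {γ} hγ => ?_
  have : Nonempty (Iio γ) := ⟨⟨0, hγ.pos⟩⟩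
  rw [climb_of_isSuccLimit f hγ, Set.image_eq_range]
  exact isLUB_ciSup Ordinal.bddAbove_of_small

theorem le_climb (γ : Ordinal.{u}) : γ ≤ climb f γ :=
  (isNormal_climb f).strictMono.le_apply

theorem intoFun_climb {θ : Cardinal.{u}} (hθ : θ.IsRegular) (hf : intoFun θ f) :
    intoFun θ (climb f) := by
  have hlim := Cardinal.isSuccLimit_ord hθ.aleph0_le
  intro γ
  induction γ using Ordinal.limitRecOn with
  | zero => exact fun _ => (climb_zero f).symm ▸ hlim.bot_lt
  | add_one γ IH =>
    rw [← Order.succ_eq_add_one, climb_succ]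
    intro hγ
    have hγθ := IH ((Order.lt_succ γ).trans hγ)
    exact hlim.succ_lt (max_lt (hf _ hγθ) hγθ)
  | limit γ hγ IH =>
    intro hγθ
    rw [climb_of_isSuccLimit f hγ]
    refine Ordinal.lift_iSup_lt_of_lt_cof ?_ fun a => IH a a.2 (a.2.trans hγθ)
    rwa [Cardinal.mk_Iio_ordinal, ← Ordinal.lift_cof, hθ.cof_ord, Cardinal.lift_lift,
      Cardinal.lift_lt, ← Cardinal.lt_ord]

noncomputable def climbIndex (β : Ordinal.{u}) : Ordinal.{u} :=
  sSup (climb f ⁻¹' Iic β)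

theorem climb_le_iff_le_climbIndex {β γ : Ordinal.{u}} :
    climb f γ ≤ β ↔ γ ≤ climbIndex f β :=
  (isNormal_climb f).le_iff_le_sSup' ⟨0, by simp [climb_zero]⟩

theorem climbIndex_le_self (β : Ordinal.{u}) : climbIndex f β ≤ β :=
  (le_climb f _).trans ((climb_le_iff_le_climbIndex f).mpr le_rfl)

theorem climbIndex_eq {β γ : Ordinal.{u}} (h₁ : climb f γ ≤ β) (h₂ : β < climb f (Order.succ γ)) :
    climbIndex f β = γ := by
  rw [← not_le, climb_le_iff_le_climbIndex, Order.succ_le_iff, not_lt] at h₂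
  exact h₂.antisymm ((climb_le_iff_le_climbIndex f).mp h₁)

end Climb

section Families

variable {θ : Cardinal.{u}}

theorem evLt.trans {f g h : Ordinal.{u} → Ordinal.{u}} (hfg : evLt θ f g) (hgh : evLt θ g h) :
    evLt θ f h := by
  obtain ⟨ε₁, hε₁, h₁⟩ := hfg
  obtain ⟨ε₂, hε₂, h₂⟩ := hgh
  exact ⟨max ε₁ ε₂, max_lt hε₁ hε₂, fun τ hτ hτθ =>
    (h₁ τ (le_of_max_le_left hτ) hτθ).trans (h₂ τ (le_of_max_le_right hτ) hτθ)⟩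

theorem exists_unbounded_fibers (hθ : ℵ₀ ≤ θ) :
    ∃ v : Ordinal.{u} → Ordinal.{u}, intoFun θ v ∧
      ∀ τ < θ.ord, ∀ δ < θ.ord, ∃ γ, δ ≤ γ ∧ γ < θ.ord ∧ v γ = τ := by
  obtain ⟨e⟩ : Nonempty (Iio θ.ord × Iio θ.ord ≃ Iio θ.ord) := by
    rw [← Cardinal.eq, Cardinal.mk_prod, Cardinal.lift_id, Cardinal.mk_Iio_ordinal,
      Cardinal.card_ord]
    exact Cardinal.mul_eq_self (by simpa using hθ)
  let v := Function.extend Subtype.val (fun γ => ((e.symm γ).2 : Ordinal)) fun _ => 0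
  have hv (γ : Iio θ.ord) : v γ = (e.symm γ).2 := Subtype.val_injective.extend_apply ..
  refine ⟨v, fun γ hγ => (hv ⟨γ, hγ⟩).symm ▸ (e.symm _).2.2, fun τ hτ δ hδ => ?_⟩
  obtain ⟨x, hx⟩ := exists_le_apply_of_injective (c := θ)
    (f := fun x : Iio θ.ord => (e (x, ⟨τ, hτ⟩) : Ordinal))
    (fun x y hxy => congrArg Prod.fst (e.injective (Subtype.ext hxy)))
    (by simp) hδ
  exact ⟨_, hx, (e _).2, by simp [hv]⟩

theorem exists_dominating_family (hθ : ℵ₀ ≤ θ) :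
    ∃ F : Ordinal.{u} → Ordinal.{u} → Ordinal.{u}, (∀ η < (dNum θ).ord, intoFun θ (F η)) ∧
      ∀ g, intoFun θ g → ∃ η < (dNum θ).ord, evLt θ g (F η) := by
  obtain ⟨o, ho, F, hF, hdom⟩ : dNum.{u, u} θ ∈ _ := csInf_mem <| by
    let G (φ : Iio θ.ord → Iio θ.ord) : Ordinal.{u} → Ordinal.{u} :=
      Function.extend Subtype.val (fun τ => (φ τ : Ordinal)) fun _ => 0
    have hG (φ) (τ : Iio θ.ord) : G φ τ = φ τ := Subtype.val_injective.extend_apply ..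
    obtain ⟨F, hF⟩ := exists_image_Iio_ord_eq_range (c := θ ^ θ)
      (by simp [Cardinal.mk_Iio_ordinal]) G
    refine ⟨θ ^ θ, (θ ^ θ).ord, Cardinal.card_ord _, F, fun i hi τ hτ => ?_, fun g hg => ?_⟩
    · obtain ⟨φ, hφ⟩ : F i ∈ range G := hF ▸ mem_image_of_mem F hi
      exact hφ ▸ (hG φ ⟨τ, hτ⟩).symm ▸ (φ _).2
    · have hlim := Cardinal.isSuccLimit_ord hθ
      let φ (τ : Iio θ.ord) : Iio θ.ord := ⟨Order.succ (g τ), hlim.succ_lt (hg τ τ.2)⟩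
      obtain ⟨i, hi, hiφ⟩ : G φ ∈ F '' Iio _ := hF ▸ mem_range_self φ
      refine ⟨i, hi, 0, hlim.pos, fun τ _ hτ => hiφ ▸ ?_⟩
      exact (hG φ ⟨τ, hτ⟩).symm ▸ Order.lt_succ (g τ)
  obtain ⟨F', hF'⟩ := exists_image_Iio_ord_eq_range (c := dNum.{u, u} θ)
    (by simp [Cardinal.mk_Iio_ordinal, ho]) fun i : Iio o => F i
  refine ⟨F', fun η hη => ?_, fun g hg => ?_⟩
  · obtain ⟨⟨i, hi⟩, hiη⟩ : F' η ∈ range _ := hF' ▸ mem_image_of_mem F' hη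
    exact hiη ▸ hF i hi
  · obtain ⟨i, hi, hgi⟩ := hdom g hg
    obtain ⟨η, hη, hηi⟩ : F i ∈ F' '' Iio _ := hF' ▸ mem_range_self (⟨i, hi⟩ : Iio o)
    exact ⟨η, hη, hηi ▸ hgi⟩

theorem exists_evLt_bound {α : Type v} (G : α → Ordinal.{u} → Ordinal.{u})
    (hG : ∀ a, intoFun θ (G a)) (hα : Cardinal.lift.{u} #α < Cardinal.lift.{v} (bNum.{u, u} θ)) :
    ∃ g, intoFun θ g ∧ ∀ a, evLt θ (G a) g := by
  by_contra hunbdd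
  obtain ⟨c, hc⟩ := Cardinal.mem_range_lift_of_le hα.le
  obtain ⟨F, hF⟩ := exists_image_Iio_ord_eq_range hc.symm G
  refine (csInf_le' ⟨c.ord, Cardinal.card_ord c, F, fun i hi => ?_, ?_⟩ : bNum θ ≤ c).not_gt
    (Cardinal.lift_lt.mp (hc ▸ hα))
  · obtain ⟨a, ha⟩ : F i ∈ range G := hF ▸ mem_image_of_mem F hi
    exact ha ▸ hG a
  · rintro ⟨g, hg, hgF⟩
    refine hunbdd ⟨g, hg, fun a => ?_⟩
    obtain ⟨i, hi, hia⟩ : G a ∈ F '' Iio c.ord := hF ▸ mem_range_self a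
    exact hia ▸ hgF i hi

end Families

theorem exists_mem_climbIndex_eq {θ : Cardinal.{u}} (hθ : θ.IsRegular)
    {f v : Ordinal.{u} → Ordinal.{u}} (hf : intoFun θ f)
    (hv : ∀ τ < θ.ord, ∀ δ < θ.ord, ∃ γ, δ ≤ γ ∧ γ < θ.ord ∧ v γ = τ) {B : Set Ordinal.{u}}
    (hB : ∃ ε < θ.ord, ∀ σ, ε ≤ σ → σ < θ.ord → ∃ β ∈ B, σ ≤ β ∧ β < f σ)
    {τ : Ordinal.{u}} (hτ : τ < θ.ord) : ∃ β ∈ B, v (climbIndex f β) = τ := by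
  obtain ⟨ε, hε, hB⟩ := hB
  obtain ⟨γ, hεγ, hγ, rfl⟩ := hv τ hτ ε hε
  obtain ⟨β, hβB, hγβ, hβf⟩ :=
    hB (climb f γ) (hεγ.trans (le_climb f γ)) (intoFun_climb f hθ hf γ hγ)
  exact ⟨β, hβB, congrArg v (climbIndex_eq f hγβ (hβf.trans (apply_climb_lt_climb_succ f γ)))⟩

theorem stmt_11_general (θ : Cardinal.{0}) (hθreg : θ.IsRegular) :
    ∃ p : Ordinal.{0} → Ordinal.{0} → Ordinal.{0},
      (∀ η < (dNum θ).ord, ∀ β < θ.ord, p η β < θ.ord) ∧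
      ∀ ℬ : Set (Set Ordinal.{0}), ℬ.Nonempty →
        (∀ B ∈ ℬ, B ⊆ Set.Iio θ.ord ∧ ∀ α < θ.ord, ∃ β ∈ B, α ≤ β) →
        Cardinal.mk ↥ℬ < Cardinal.lift.{1,0} (bNum θ) →
        ∃ η < (dNum θ).ord, ∀ B ∈ ℬ, ∀ τ < θ.ord, ∃ β ∈ B, p η β = τ := by
  obtain ⟨F, hF, hFdom⟩ := exists_dominating_family hθreg.aleph0_le
  obtain ⟨v, hv, hvfib⟩ := exists_unbounded_fibers hθreg.aleph0_le
  refine ⟨fun η β => v (climbIndex (F η) β),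
    fun η _ β hβ => hv _ ((climbIndex_le_self _ β).trans_lt hβ), fun ℬ _ hℬ hcard => ?_⟩
  let next (B : ℬ) (σ : Ordinal) : Ordinal := sInf ((B : Set Ordinal) ∩ Ici σ)
  have next_mem (B : ℬ) {σ} (hσ : σ < θ.ord) : next B σ ∈ (B : Set Ordinal) ∩ Ici σ := by
    obtain ⟨β, hβ, hσβ⟩ := (hℬ B B.2).2 σ hσ
    exact csInf_mem ⟨β, hβ, hσβ⟩
  obtain ⟨g, hg, hnext⟩ := exists_evLt_bound next
    (fun B σ hσ => (hℬ B B.2).1 (next_mem B hσ).1) (by simpa using hcard)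
  obtain ⟨η, hη, hgF⟩ := hFdom g hg
  refine ⟨η, hη, fun B hB τ hτ => exists_mem_climbIndex_eq hθreg (hF η hη) hvfib ?_ hτ⟩
  obtain ⟨ε, hε, hlt⟩ := (hnext ⟨B, hB⟩).trans hgF
  exact ⟨ε, hε, fun σ hεσ hσ =>
    ⟨next ⟨B, hB⟩ σ, (next_mem ⟨B, hB⟩ hσ).1, (next_mem ⟨B, hB⟩ hσ).2, hlt σ hεσ hσ⟩⟩

theorem stmt_11 (θ : Cardinal.{0}) (hθ : ℵ₀ ≤ θ) (hθreg : θ.IsRegular) :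
    ∃ p : Ordinal.{0} → Ordinal.{0} → Ordinal.{0},
      (∀ η < (dNum θ).ord, ∀ β < θ.ord, p η β < θ.ord) ∧
      ∀ ℬ : Set (Set Ordinal.{0}), ℬ.Nonempty →
        (∀ B ∈ ℬ, B ⊆ Set.Iio θ.ord ∧ ∀ α < θ.ord, ∃ β ∈ B, α ≤ β) →
        Cardinal.mk ↥ℬ < Cardinal.lift.{1,0} (bNum θ) →
        ∃ η < (dNum θ).ord, ∀ B ∈ ℬ, ∀ τ < θ.ord, ∃ β ∈ B, p η β = τ :=
  stmt_11_general θ hθreg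
end
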